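/- For a general a ∈ ℤ^n and a squarefree monomial ideal I with associated simplicial complex Δ, the complex Δ_a equals lk_{st_Δ H_a}(G_a), the link of G_a in the star of H_a in Δ. -/
import Mathlib


/- STATEMENT 8: For a squarefree monomial ideal I (Stanley–Reisner ideal of Δ) and
any a ∈ ℤ^n, Δ_a = lk_{st_Δ H_a}(G_a), the link of G_a in the star of H_a in Δ.
`G : Finset (Fin n → ℕ)` is the minimal set of monomial generators (exponent
vectors; squarefree: all exponents ≤ 1, generators nonzero). -/

open Finset

def Ga {n : ℕ} (a : Fin n → ℤ) : Finset (Fin n) := Finset.univ.filter (fun i => a i < 0)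

/-- `H_a = {i : a_i > 0}`. -/
def Ha {n : ℕ} (a : Fin n → ℤ) : Finset (Fin n) := Finset.univ.filter (fun i => 0 < a i)

def deltaA {n : ℕ} (G : Finset (Fin n → ℕ)) (a : Fin n → ℤ) : Set (Finset (Fin n)) :=
  { s | ∃ F : Finset (Fin n), Ga a ⊆ F ∧
      (∀ u ∈ G, ∃ j, j ∉ F ∧ 0 ≤ a j ∧ a j < (u j : ℤ)) ∧ s = F \ Ga a }

def msupp {n : ℕ} (u : Fin n → ℕ) : Finset (Fin n) := Finset.univ.filter (fun i => u i ≠ 0)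

/-- The simplicial complex `Δ` with Stanley–Reisner ideal `I`. -/
def SRcomplex {n : ℕ} (G : Finset (Fin n → ℕ)) : Set (Finset (Fin n)) :=
  { F | ∀ u ∈ G, ¬ msupp u ⊆ F }

/-- `st_Δ F = { G : F ∪ G ∈ Δ }`. -/
def star {n : ℕ} (Δ : Set (Finset (Fin n))) (F : Finset (Fin n)) : Set (Finset (Fin n)) :=
  { L | F ∪ L ∈ Δ }

/-- `lk_Γ F = { L : F ∪ L ∈ Γ, F ∩ L = ∅ }`. -/
def link {n : ℕ} (Γ : Set (Finset (Fin n))) (F : Finset (Fin n)) : Set (Finset (Fin n)) :=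
  { L | F ∪ L ∈ Γ ∧ F ∩ L = ∅ }

theorem deltaA_eq_link_star {n : ℕ} (G : Finset (Fin n → ℕ))
    (hsf : ∀ u ∈ G, ∀ j, u j ≤ 1) (hne : ∀ u ∈ G, u ≠ 0) (a : Fin n → ℤ) :
    deltaA G a = link (star (SRcomplex G) (Ha a)) (Ga a) := by
  ext s
  simp only [deltaA, link, _root_.star, SRcomplex, Set.mem_setOf_eq]
  constructor
  · rintro ⟨F, hGF, hF, rfl⟩
    refine ⟨fun u hu hsub => ?_, ?_⟩
    · obtain ⟨j, hjF, hj0, hju⟩ := hF u hu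
      have huj : u j ≠ 0 := by
        intro h; rw [h] at hju; omega
      have hjm : j ∈ msupp u := by simp [msupp, huj]
      have : j ∈ Ha a ∪ (Ga a ∪ F \ Ga a) := hsub hjm
      have haj1 : (u j : ℤ) ≤ 1 := by exact_mod_cast hsf u hu j
      simp only [Finset.mem_union, Finset.mem_sdiff, Ha, Ga, Finset.mem_filter,
        Finset.mem_univ, true_and] at this
      rcases this with h | h | h
      · omega
      · omega
      · exact hjF h.1
    · ext j
      simp [Ga]
  · rintro ⟨hmem, hdisj⟩
    refine ⟨Ga a ∪ s, Finset.subset_union_left, fun u hu => ?_, ?_⟩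
    · by_contra hcon
      push_neg at hcon
      apply hmem u hu
      intro j hj
      simp only [msupp, Finset.mem_filter, Finset.mem_univ, true_and] at hj
      have h1 : (1 : ℤ) ≤ u j := by
        have := Nat.one_le_iff_ne_zero.mpr hj
        exact_mod_cast this
      have hj2 := hcon j
      simp only [Finset.mem_union, Ha, Ga, Finset.mem_filter, Finset.mem_univ, true_and] at *
      by_contra hc
      push_neg at hc
      obtain ⟨hc1, hc2, hc3⟩ := hc
      have hnot : ¬ (a j < 0 ∨ j ∈ s) := by push_neg; exact ⟨by omega, hc3⟩
      have := hj2 hnot (by omega)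
      omega
    · rw [Finset.union_sdiff_cancel_left]
      rwa [Finset.disjoint_iff_inter_eq_empty]
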